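/- Let E(w) = q_0 + Σ_{i=1}^{n} w_i q_i with Σ w_i² = 1 (a light-like direction in Q), and set n_x^w(s) = ‖pr_Q e^{-s ad(E(w))} e^{x ad(q_0)} J_1‖². Then n_x^w(s)/B(q_2,q_2) = (cos²x - w_2²) s² - 2 cos(x) sin(x) s + sin²x, so that its roots are s_± = sin(x)/(cos(x) ∓ w_2) (up to exchange according to the sign of w_2 sin x). -/
import Mathlib


/-- The squared Killing norm `n_x^w(s) = ‖pr_Q e^{-s ad(E)} X‖²`, where `X = e^{x ad(q₀)} J₁`;
since `ad(E)³ = 0`, `e^{-s ad(E)} X = X - s[E,X] + (s²/2)[E,[E,X]]`. -/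
noncomputable def geodesicNormFun {L : Type*} [LieRing L] [LieAlgebra ℝ L]
    (prQ : L →ₗ[ℝ] L) (E X : L) (s : ℝ) : ℝ :=
  killingForm ℝ L (prQ (X - s • ⁅E, X⁆ + (s ^ 2 / 2 : ℝ) • ⁅E, ⁅E, X⁆⁆))
    (prQ (X - s • ⁅E, X⁆ + (s ^ 2 / 2 : ℝ) • ⁅E, ⁅E, X⁆⁆))

/-- Let `E(w) = q₀ + Σ_{i=1}^n w_i q_i` with `Σ w_i² = 1` (a light-like
direction in `Q`), and set `n_x^w(s) = ‖pr_Q e^{-s ad(E(w))} e^{x ad(q₀)} J₁‖²`.  Then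
`n_x^w(s)/B(q₂,q₂) = (cos²x - w₂²) s² - 2 cos x sin x · s + sin²x`, so that its roots are
`s₊ = sin x/(cos x - w₂)` and `s₋ = sin x/(cos x + w₂)` (up to exchange according to the
sign of `w₂ sin x`). -/
theorem geodesic_norm_function
    (n : ℕ) (hn : 2 ≤ n) {L : Type*} [LieRing L] [LieAlgebra ℝ L]
    -- `L` is (isomorphic to) `so(2,n)`
    (hL : Nonempty (L ≃ₗ⁅ℝ⁆ ↥(LieAlgebra.Orthogonal.so' (Fin 2) (Fin n) ℝ)))
    -- `σ` defines `Q` (on which it is `-id`), `prQ` is the projection onto `Q`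
    (σ : L ≃ₗ⁅ℝ⁆ L) (hσ : Function.Involutive σ)
    (prQ : L →ₗ[ℝ] L) (hprQ : ∀ y, prQ y = (1/2 : ℝ) • (y - σ y))
    -- the orthonormal basis `q₀, …, q_n` of `Q` and the element `J₁ ∈ H`
    (J1 : L) (hJ1 : σ J1 = J1)
    (q : Fin (n+1) → L) (hqQ : ∀ i, σ (q i) = -q i)
    (hB : ∀ i j : Fin (n+1), killingForm ℝ L (q i) (q j)
      = if i = j then (if i = 0 then -(2 * (n : ℝ)) else (2 * (n : ℝ))) else 0)
    -- `ad` relations of the basis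
    (had0 : ∀ j : Fin (n+1), j ≠ 0 → ⁅q 0, ⁅q 0, q j⁆⁆ = -q j)
    (hadi : ∀ i j : Fin (n+1), i ≠ j → i ≠ 0 → ⁅q i, ⁅q i, q j⁆⁆ = q j)
    -- the light-like direction `E(w)`
    (w : Fin (n+1) → ℝ) (hw : ∑ i ∈ Finset.univ.erase 0, (w i) ^ 2 = 1)
    (E : L) (hE : E = q 0 + ∑ i ∈ Finset.univ.erase 0, w i • q i)
    (hE3 : (LieAlgebra.ad ℝ L E) ^ 3 = 0)
    (hEJ1 : ⁅E, J1⁆ = w 2 • q 0 + q 2)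
    -- the point on the circle: `e^{x ad(q₀)} J₁ = cos x · J₁ + sin x · q₂`
    (x : ℝ) (X : L) (hX : X = Real.cos x • J1 + Real.sin x • q 2) :
    -- the quadratic formula for `n_x^w`
    (∀ s : ℝ, geodesicNormFun prQ E X s
        = killingForm ℝ L (q 2) (q 2)
          * ((Real.cos x ^ 2 - (w 2) ^ 2) * s ^ 2
              - 2 * Real.cos x * Real.sin x * s + Real.sin x ^ 2))
    -- the roots of `n_x^w`
    ∧ (Real.cos x - w 2 ≠ 0 → geodesicNormFun prQ E X (Real.sin x / (Real.cos x - w 2)) = 0)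
    ∧ (Real.cos x + w 2 ≠ 0 → geodesicNormFun prQ E X (Real.sin x / (Real.cos x + w 2)) = 0) := by
  
  classical
  set S : Finset (Fin (n+1)) := Finset.univ.erase 0 with hS
  have memS : ∀ i ∈ S, i ≠ (0 : Fin (n+1)) := fun i hi => (Finset.mem_erase.mp hi).1
  -- index 2
  have h20 : (2 : Fin (n+1)) ≠ 0 := by
    have h : ((2 : Fin (n+1)) : ℕ) = 2 % (n+1) := rfl
    have h2 : ((2 : Fin (n+1)) : ℕ) = 2 := by rw [h, Nat.mod_eq_of_lt (by omega)]
    intro hcontra; rw [hcontra] at h2; simp at h2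
  -- Killing form values on the basis
  have B00 : killingForm ℝ L (q 0) (q 0) = -(2 * (n:ℝ)) := by rw [hB]; simp
  have B22 : killingForm ℝ L (q 2) (q 2) = 2 * (n:ℝ) := by
    rw [hB]; rw [if_pos rfl, if_neg h20]
  have B20 : killingForm ℝ L (q 2) (q 0) = 0 := by rw [hB]; rw [if_neg h20]
  have B02 : killingForm ℝ L (q 0) (q 2) = 0 := by rw [hB]; rw [if_neg (Ne.symm h20)]
  -- invariance of the Killing form
  have inv1 : ∀ a b c : L, killingForm ℝ L ⁅a, b⁆ c = killingForm ℝ L a ⁅b, c⁆ :=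
    fun a b c => LieModule.traceForm_apply_lie_apply ℝ L L a b c
  have inv2 : ∀ a b c : L, killingForm ℝ L ⁅a, b⁆ c = - killingForm ℝ L b ⁅a, c⁆ :=
    fun a b c => LieModule.traceForm_apply_lie_apply' ℝ L L a b c
  have flip1 : ∀ a b c : L, killingForm ℝ L b ⁅a, c⁆ = - killingForm ℝ L ⁅a, b⁆ c := by
    intro a b c; rw [inv2 a b c]; ring
  have comm : ∀ a b : L, killingForm ℝ L a b = killingForm ℝ L b a :=
    fun a b => LieModule.traceForm_comm ℝ L L a b
  -- bracket with a sum
  have lsum : ∀ (y : L) (f : Fin (n+1) → L), ⁅y, ∑ i ∈ S, f i⁆ = ∑ i ∈ S, ⁅y, f i⁆ := by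
    intro y f
    simp only [← LieAlgebra.ad_apply ℝ L]
    exact map_sum _ f S
  -- basic Killing computations with E
  have hBE0 : killingForm ℝ L E (q 0) = -(2 * (n:ℝ)) := by
    rw [hE]
    simp only [map_add, LinearMap.add_apply, map_sum, LinearMap.sum_apply, map_smul,
      LinearMap.smul_apply, smul_eq_mul]
    rw [Finset.sum_eq_zero (fun i hi => by
      rw [hB, if_neg]; · ring
      · intro hc; exact memS i hi hc), B00]
    ring
  have hBqiE : ∀ i ∈ S, killingForm ℝ L (q i) E = 2 * (n:ℝ) * w i := by
    intro i hi
    rw [hE]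
    simp only [map_add, map_sum, map_smul, smul_eq_mul]
    rw [hB, if_neg (fun hc => memS i hi (hc : i = 0))]
    rw [Finset.sum_eq_single_of_mem i hi (fun j hj hji => by
      rw [hB, if_neg (Ne.symm hji)]; ring)]
    rw [hB, if_pos rfl, if_neg (memS i hi)]
    ring
  have hBEE : killingForm ℝ L E E = 0 := by
    have hsum1 : ∑ i ∈ S, w i * killingForm ℝ L (q i) (q 0) = 0 :=
      Finset.sum_eq_zero (fun i hi => by rw [hB, if_neg (memS i hi)]; ring)
    have hsum2 : ∑ i ∈ S, w i * (killingForm ℝ L (q 0) (q i)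
        + ∑ j ∈ S, w j * killingForm ℝ L (q j) (q i)) = 2 * (n:ℝ) * ∑ i ∈ S, (w i)^2 := by
      rw [Finset.mul_sum]
      refine Finset.sum_congr rfl (fun i hi => ?_)
      rw [hB 0 i, if_neg (fun hc => memS i hi hc.symm)]
      rw [Finset.sum_eq_single_of_mem i hi (fun j hj hji => by rw [hB, if_neg hji]; ring)]
      rw [hB, if_pos rfl, if_neg (memS i hi)]
      ring
    conv_lhs => rw [hE]
    simp only [map_add, LinearMap.add_apply, map_sum, LinearMap.sum_apply, map_smul,
      LinearMap.smul_apply, smul_eq_mul]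
    rw [B00, hsum1, hsum2, hw]
    ring
  -- ad(q0)^2 on E
  have hq0E : ⁅q 0, E⁆ = ∑ i ∈ S, w i • ⁅q 0, q i⁆ := by
    rw [hE, lie_add, lie_self, zero_add, lsum]
    exact Finset.sum_congr rfl fun i _ => lie_smul _ _ _
  have hq0q0E : ⁅q 0, ⁅q 0, E⁆⁆ = q 0 - E := by
    rw [hq0E, lsum]
    rw [Finset.sum_congr rfl (fun i hi => by
      rw [lie_smul, had0 i (memS i hi), smul_neg])]
    rw [Finset.sum_neg_distrib, hE]
    abel
  -- ad(E)^3 = 0 pointwise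
  have hadE3 : ∀ y : L, ⁅E, ⁅E, ⁅E, y⁆⁆⁆ = 0 := by
    intro y
    have h : ((LieAlgebra.ad ℝ L E)^3) y = 0 := by rw [hE3]; rfl
    simpa [pow_succ, Module.End.mul_apply, LieAlgebra.ad_apply] using h
  -- key pairing values
  have P0 : killingForm ℝ L ⁅E, q 0⁆ ⁅E, q 0⁆ = 2 * (n:ℝ) := by
    have h1 : ⁅q 0, ⁅E, q 0⁆⁆ = E - q 0 := by
      rw [← lie_skew E (q 0), lie_neg, hq0q0E, neg_sub]
    rw [inv1 E (q 0) ⁅E, q 0⁆, h1, map_sub, hBEE, hBE0]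
    ring
  have hq2eq : q 2 = ⁅E, J1⁆ - w 2 • q 0 := by rw [hEJ1]; abel
  have hEq2 : ⁅E, q 2⁆ = ⁅E, ⁅E, J1⁆⁆ - w 2 • ⁅E, q 0⁆ := by
    conv_lhs => rw [hq2eq]
    rw [lie_sub, lie_smul]
  have hK : ⁅E, ⁅E, q 2⁆⁆ = -(w 2) • ⁅E, ⁅E, q 0⁆⁆ := by
    rw [hEq2, lie_sub, lie_smul, hadE3 J1, zero_sub, neg_smul]
  have hq0adq0 : killingForm ℝ L (q 0) ⁅E, ⁅E, q 0⁆⁆ = -(2 * (n:ℝ)) := by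
    rw [flip1 E (q 0) ⁅E, q 0⁆, P0]
  have hq0K : killingForm ℝ L (q 0) ⁅E, ⁅E, q 2⁆⁆ = 2 * (n:ℝ) * w 2 := by
    rw [hK, map_smul, smul_eq_mul, hq0adq0]
    ring
  have hEq2Eq0 : killingForm ℝ L ⁅E, q 2⁆ ⁅E, q 0⁆ = -(2 * (n:ℝ)) * w 2 := by
    rw [hEq2]
    simp only [map_sub, LinearMap.sub_apply, map_smul, LinearMap.smul_apply, smul_eq_mul]
    rw [flip1 E ⁅E, ⁅E, J1⁆⁆ (q 0), hadE3 J1]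
    simp only [LinearMap.map_zero₂, LinearMap.zero_apply]
    rw [P0]
    ring
  have hq2K : killingForm ℝ L (q 2) ⁅E, ⁅E, q 2⁆⁆ = -(2 * (n:ℝ)) * (w 2)^2 := by
    rw [hK, map_smul, smul_eq_mul]
    rw [flip1 E (q 2) ⁅E, q 0⁆, hEq2Eq0]
    ring
  have hKK : killingForm ℝ L ⁅E, ⁅E, q 2⁆⁆ ⁅E, ⁅E, q 2⁆⁆ = 0 := by
    rw [inv2 E ⁅E, q 2⁆ ⁅E, ⁅E, q 2⁆⁆, hadE3 (q 2)]
    simp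
  have hKq0 : killingForm ℝ L ⁅E, ⁅E, q 2⁆⁆ (q 0) = 2 * (n:ℝ) * w 2 := by
    rw [comm]; exact hq0K
  have hKq2 : killingForm ℝ L ⁅E, ⁅E, q 2⁆⁆ (q 2) = -(2 * (n:ℝ)) * (w 2)^2 := by
    rw [comm]; exact hq2K
  -- σ and prQ facts
  have hcoe : ∀ z : L, σ z = σ.toLinearEquiv z := fun _ => rfl
  have hσE : σ E = -E := by
    have h1 : σ (q 0 + ∑ i ∈ S, w i • q i) = σ (q 0) + ∑ i ∈ S, w i • σ (q i) := by
      simp only [hcoe, map_add, map_sum, map_smul]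
    rw [hE, h1]
    simp only [hqQ, smul_neg]
    rw [Finset.sum_neg_distrib]
    abel
  have hprQodd : ∀ z : L, σ z = -z → prQ z = z := by
    intro z hz
    rw [hprQ, hz, sub_neg_eq_add, ← two_smul ℝ z, smul_smul]
    norm_num
  have hprQeven : ∀ z : L, σ z = z → prQ z = 0 := by
    intro z hz
    rw [hprQ, hz, sub_self, smul_zero]
  have pq0 : prQ (q 0) = q 0 := hprQodd _ (hqQ 0)
  have pq2 : prQ (q 2) = q 2 := hprQodd _ (hqQ 2)
  have pJ1 : prQ J1 = 0 := hprQeven _ hJ1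
  have pEq0 : prQ ⁅E, q 0⁆ = 0 := hprQeven _ (by
    rw [LieEquiv.map_lie, hσE, hqQ, neg_lie, lie_neg, neg_neg])
  have pEq2 : prQ ⁅E, q 2⁆ = 0 := hprQeven _ (by
    rw [LieEquiv.map_lie, hσE, hqQ, neg_lie, lie_neg, neg_neg])
  have pK : prQ ⁅E, ⁅E, q 2⁆⁆ = ⁅E, ⁅E, q 2⁆⁆ := hprQodd _ (by
    rw [LieEquiv.map_lie, hσE, LieEquiv.map_lie, hσE, hqQ]
    simp only [neg_lie, lie_neg, neg_neg])
  -- brackets with X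
  have hEX : ⁅E, X⁆ = Real.cos x • (w 2 • q 0 + q 2) + Real.sin x • ⁅E, q 2⁆ := by
    rw [hX, lie_add, lie_smul, lie_smul, hEJ1]
  have hEEX : ⁅E, ⁅E, X⁆⁆ = Real.cos x • (w 2 • ⁅E, q 0⁆ + ⁅E, q 2⁆)
      + Real.sin x • ⁅E, ⁅E, q 2⁆⁆ := by
    rw [hEX, lie_add, lie_smul, lie_smul, lie_add, lie_smul]
  -- the projection of the truncated exponential
  have hproj : ∀ s : ℝ, prQ (X - s • ⁅E, X⁆ + (s ^ 2 / 2 : ℝ) • ⁅E, ⁅E, X⁆⁆)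
      = (Real.sin x - s * Real.cos x) • q 2 + (-(s * Real.cos x * w 2)) • q 0
        + (s ^ 2 / 2 * Real.sin x) • ⁅E, ⁅E, q 2⁆⁆ := by
    intro s
    rw [hEEX, hEX, hX]
    simp only [map_add, map_sub, map_smul, pq0, pq2, pJ1, pEq0, pEq2, pK, smul_zero,
      add_zero, zero_add, smul_add]
    module
  have hpy : Real.sin x ^ 2 + Real.cos x ^ 2 = 1 := Real.sin_sq_add_cos_sq x
  have main : ∀ s : ℝ, geodesicNormFun prQ E X s
      = killingForm ℝ L (q 2) (q 2)
        * ((Real.cos x ^ 2 - (w 2) ^ 2) * s ^ 2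
            - 2 * Real.cos x * Real.sin x * s + Real.sin x ^ 2) := by
    intro s
    rw [geodesicNormFun, hproj s]
    simp only [map_add, LinearMap.add_apply, map_smul, LinearMap.smul_apply, smul_eq_mul]
    rw [B00, B22, B20, B02, hq0K, hq2K, hKK, hKq0, hKq2]
    linear_combination (-(2*(n:ℝ)) * s^2 * (w 2)^2) * hpy
  refine ⟨main, ?_, ?_⟩
  · intro h
    rw [main]
    have hz : (Real.cos x ^ 2 - (w 2) ^ 2) * (Real.sin x / (Real.cos x - w 2)) ^ 2
        - 2 * Real.cos x * Real.sin x * (Real.sin x / (Real.cos x - w 2))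
        + Real.sin x ^ 2 = 0 := by
      field_simp
      ring
    rw [hz, mul_zero]
  · intro h
    rw [main]
    have hz : (Real.cos x ^ 2 - (w 2) ^ 2) * (Real.sin x / (Real.cos x + w 2)) ^ 2
        - 2 * Real.cos x * Real.sin x * (Real.sin x / (Real.cos x + w 2))
        + Real.sin x ^ 2 = 0 := by
      field_simp
      ring
    rw [hz, mul_zero]
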